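/- arXiv:2601.03971 — 2 statements merged into one kernel-verified Lean document; each statement's English description precedes it below -/
import Mathlib

section
/- Let B₁, B₂ ∈ ℝ^{m×n}. Then ‖B₁ᵀ(I + B₁B₁ᵀ)⁻¹B₁ − B₂ᵀ(I + B₂B₂ᵀ)⁻¹B₂‖_F ≤ D · ‖B₁ − B₂‖_F, where D = ‖(I + B₁B₁ᵀ)⁻¹B₁‖ + ‖B₂‖·‖B₁‖·(‖B₁‖ + ‖B₂‖) + ‖(I + B₂B₂ᵀ)⁻¹B₂‖, with ‖·‖ the spectral norm and ‖·‖_F the Frobenius norm. -/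
open Matrix

/-- Frobenius norm of a real matrix. -/
noncomputable def frob {m n : ℕ} (M : Matrix (Fin m) (Fin n) ℝ) : ℝ :=
  Real.sqrt (∑ i, ∑ j, (M i j) ^ 2)

/-- Spectral (operator) norm of a real matrix, as the operator norm of the induced
linear map between Euclidean spaces. -/
noncomputable def spec {m n : ℕ} (M : Matrix (Fin m) (Fin n) ℝ) : ℝ :=
  ‖LinearMap.toContinuousLinearMap (Matrix.toEuclideanLin M)‖

/-! Write `Aᵢ = (1 + Bᵢ Bᵢᵀ)⁻¹`. Then
`B₁ᵀ A₁ B₁ - B₂ᵀ A₂ B₂ = (B₁ - B₂)ᵀ A₁ B₁ + B₂ᵀ (A₁ - A₂) B₁ + B₂ᵀ A₂ (B₁ - B₂)`,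
and by the resolvent identity `A₁ - A₂ = A₁ (B₂ B₂ᵀ - B₁ B₁ᵀ) A₂`, where
`B₂ B₂ᵀ - B₁ B₁ᵀ = B₂ (B₂ - B₁)ᵀ + (B₂ - B₁) B₁ᵀ`. Each term is bounded by the mixed
inequalities `‖X Y‖_F ≤ ‖X‖ ‖Y‖_F` and `‖X Y‖_F ≤ ‖X‖_F ‖Y‖`, together with `‖Aᵢ‖ ≤ 1`,
which holds because `‖x‖² ≤ ⟪x, (1 + Bᵢ Bᵢᵀ) x⟫`. -/

namespace Matrix

lemma transpose_mul_mul_sub_transpose_mul_mul {R : Type*} [Ring R] {m n : Type*} [Fintype m]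
    (X Y : Matrix m n R) (P Q : Matrix m m R) :
    Xᵀ * P * X - Yᵀ * Q * Y = (X - Y)ᵀ * (P * X) + Yᵀ * (P - Q) * X + Yᵀ * Q * (X - Y) := by
  simp only [transpose_sub, Matrix.sub_mul, Matrix.mul_sub, Matrix.mul_assoc]
  abel

lemma mul_transpose_sub_mul_transpose {R : Type*} [Ring R] {m n : Type*} [Fintype n]
    (X Y : Matrix m n R) : X * Xᵀ - Y * Yᵀ = X * (X - Y)ᵀ + (X - Y) * Yᵀ := by
  simp only [transpose_sub, Matrix.sub_mul, Matrix.mul_sub]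
  abel

lemma nonsing_inv_sub_nonsing_inv {R : Type*} [CommRing R] {m : Type*} [Fintype m]
    [DecidableEq m] {P Q : Matrix m m R} (hP : IsUnit P) (hQ : IsUnit Q) :
    P⁻¹ - Q⁻¹ = P⁻¹ * (Q - P) * Q⁻¹ := by
  simp only [nonsing_inv_eq_ringInverse]
  exact Ring.inverse_sub_inverse (iff_of_true hP hQ)

section GramResolvent

variable {m n : Type*} [Fintype m] [Fintype n]

lemma posSemidef_mul_transpose_self (B : Matrix m n ℝ) : (B * Bᵀ).PosSemidef := by
  simpa [conjTranspose_eq_transpose_of_trivial] using posSemidef_self_mul_conjTranspose B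

variable [DecidableEq m]

lemma isUnit_one_add_mul_transpose_self (B : Matrix m n ℝ) : IsUnit (1 + B * Bᵀ) :=
  (PosDef.one.add_posSemidef (posSemidef_mul_transpose_self B)).isUnit

lemma transpose_inv_one_add_mul_transpose_self (B : Matrix m n ℝ) :
    ((1 + B * Bᵀ)⁻¹)ᵀ = (1 + B * Bᵀ)⁻¹ :=
  IsSymm.inv (isHermitian_one.add (posSemidef_mul_transpose_self B).isHermitian)

end GramResolvent

end Matrix

section FrobeniusNorm

attribute [local instance] Matrix.frobeniusNormedAddCommGroup

variable {m n : ℕ}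

lemma frob_eq_norm (M : Matrix (Fin m) (Fin n) ℝ) : frob M = ‖M‖ := by
  simp [frob, frobenius_norm_def, Real.sqrt_eq_rpow]

lemma frob_nonneg (M : Matrix (Fin m) (Fin n) ℝ) : 0 ≤ frob M := Real.sqrt_nonneg _

lemma frob_add_le (X Y : Matrix (Fin m) (Fin n) ℝ) : frob (X + Y) ≤ frob X + frob Y := by
  simpa only [frob_eq_norm] using norm_add_le X Y

lemma frob_transpose (M : Matrix (Fin m) (Fin n) ℝ) : frob Mᵀ = frob M := by
  simp only [frob_eq_norm, frobenius_norm_transpose]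

lemma frob_sub_comm (X Y : Matrix (Fin m) (Fin n) ℝ) : frob (X - Y) = frob (Y - X) := by
  simp only [frob_eq_norm, norm_sub_rev]

end FrobeniusNorm

section OperatorNorm

open scoped Matrix.Norms.L2Operator

variable {m n : ℕ}

lemma spec_eq_norm (M : Matrix (Fin m) (Fin n) ℝ) : spec M = ‖M‖ := rfl

lemma spec_nonneg (M : Matrix (Fin m) (Fin n) ℝ) : 0 ≤ spec M := norm_nonneg _

lemma spec_transpose (M : Matrix (Fin m) (Fin n) ℝ) : spec Mᵀ = spec M := by
  simp only [spec_eq_norm, ← conjTranspose_eq_transpose_of_trivial, l2_opNorm_conjTranspose]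

lemma spec_transpose_mul_of_transpose_eq {A : Matrix (Fin m) (Fin m) ℝ} (hA : Aᵀ = A)
    (B : Matrix (Fin m) (Fin n) ℝ) : spec (Bᵀ * A) = spec (A * B) := by
  rw [← spec_transpose, transpose_mul, transpose_transpose, hA]

end OperatorNorm

lemma sq_frob_eq_sum_sq_norm_col {m n : ℕ} (M : Matrix (Fin m) (Fin n) ℝ) :
    frob M ^ 2 = ∑ j, ‖WithLp.toLp 2 (Mᵀ j)‖ ^ 2 := by
  rw [frob, Real.sq_sqrt (by positivity), Finset.sum_comm]
  simp [EuclideanSpace.real_norm_sq_eq]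

lemma frob_mul_le_spec_mul_frob {l m n : ℕ} (A : Matrix (Fin l) (Fin m) ℝ)
    (B : Matrix (Fin m) (Fin n) ℝ) : frob (A * B) ≤ spec A * frob B := by
  have hcol (j : Fin n) : ‖WithLp.toLp 2 ((A * B)ᵀ j)‖ ≤ spec A * ‖WithLp.toLp 2 (Bᵀ j)‖ :=
    -- `(A * B)ᵀ j` is definitionally `A *ᵥ Bᵀ j`
    (LinearMap.toContinuousLinearMap (toEuclideanLin A)).le_opNorm (WithLp.toLp 2 (Bᵀ j))
  refine le_of_pow_le_pow_left₀ two_ne_zero (mul_nonneg (spec_nonneg A) (frob_nonneg B)) ?_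
  rw [mul_pow, sq_frob_eq_sum_sq_norm_col, sq_frob_eq_sum_sq_norm_col, Finset.mul_sum]
  gcongr with j
  rw [← mul_pow]
  gcongr
  exact hcol j

lemma frob_mul_le_frob_mul_spec {l m n : ℕ} (A : Matrix (Fin l) (Fin m) ℝ)
    (B : Matrix (Fin m) (Fin n) ℝ) : frob (A * B) ≤ frob A * spec B := by
  simpa only [← transpose_mul, frob_transpose, spec_transpose, mul_comm (spec B)]
    using frob_mul_le_spec_mul_frob Bᵀ Aᵀ

lemma frob_mul_mul_le {k l m n : ℕ} (A : Matrix (Fin k) (Fin l) ℝ) (X : Matrix (Fin l) (Fin m) ℝ)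
    (B : Matrix (Fin m) (Fin n) ℝ) : frob (A * X * B) ≤ spec A * frob X * spec B :=
  (frob_mul_le_frob_mul_spec _ B).trans <|
    mul_le_mul_of_nonneg_right (frob_mul_le_spec_mul_frob A X) (spec_nonneg B)

lemma frob_mul_mul_le_of_spec_le_one {k l m n : ℕ} {A : Matrix (Fin k) (Fin l) ℝ}
    {B : Matrix (Fin m) (Fin n) ℝ} (hA : spec A ≤ 1) (hB : spec B ≤ 1)
    (X : Matrix (Fin l) (Fin m) ℝ) : frob (A * X * B) ≤ frob X :=
  calc _ ≤ spec A * frob X * spec B := frob_mul_mul_le _ _ _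
    _ ≤ 1 * frob X * 1 :=
      mul_le_mul (mul_le_mul_of_nonneg_right hA (frob_nonneg X)) hB (spec_nonneg B)
        (by simpa using frob_nonneg X)
    _ = frob X := by ring

lemma frob_mul_transpose_sub_mul_transpose_le {m n : ℕ} (X Y : Matrix (Fin m) (Fin n) ℝ) :
    frob (X * Xᵀ - Y * Yᵀ) ≤ (spec X + spec Y) * frob (X - Y) := by
  rw [mul_transpose_sub_mul_transpose]
  calc _ ≤ frob (X * (X - Y)ᵀ) + frob ((X - Y) * Yᵀ) := frob_add_le _ _
    _ ≤ spec X * frob (X - Y)ᵀ + frob (X - Y) * spec Yᵀ :=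
      add_le_add (frob_mul_le_spec_mul_frob _ _) (frob_mul_le_frob_mul_spec _ _)
    _ = (spec X + spec Y) * frob (X - Y) := by rw [frob_transpose, spec_transpose]; ring

open scoped RealInnerProductSpace in
lemma norm_le_norm_of_sq_norm_le_inner {E : Type*} [NormedAddCommGroup E]
    [InnerProductSpace ℝ E] {x y : E} (h : ‖x‖ ^ 2 ≤ ⟪x, y⟫) : ‖x‖ ≤ ‖y‖ := by
  nlinarith [real_inner_le_norm x y, norm_nonneg x, norm_nonneg y]

open scoped RealInnerProductSpace in
lemma spec_inv_le_one {m : ℕ} {M : Matrix (Fin m) (Fin m) ℝ} (hM : (M - 1).PosSemidef) :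
    spec M⁻¹ ≤ 1 := by
  have hunit : IsUnit M := by
    simpa using (PosDef.one.add_posSemidef hM).isUnit
  refine ContinuousLinearMap.opNorm_le_bound _ zero_le_one fun y => ?_
  set x := toEuclideanCLM (𝕜 := ℝ) M⁻¹ y
  have hy : toEuclideanCLM (𝕜 := ℝ) M x = y := by
    change (toEuclideanCLM (𝕜 := ℝ) M * toEuclideanCLM (𝕜 := ℝ) M⁻¹) y = y
    rw [← map_mul, mul_nonsing_inv _ ((isUnit_iff_isUnit_det M).mp hunit), map_one]
    rfl
  have hcoercive : ‖x‖ ^ 2 ≤ ⟪x, y⟫ := by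
    rw [← hy, inner_toEuclideanCLM, ← add_sub_cancel (1 : Matrix (Fin m) (Fin m) ℝ) M,
      add_mulVec, dotProduct_add, one_mulVec, EuclideanSpace.real_norm_sq_eq]
    have hself : x.ofLp ⬝ᵥ x.ofLp = ∑ i, x i ^ 2 := by simp only [dotProduct, sq]
    have hpsd := hM.dotProduct_mulVec_nonneg x
    rw [star_trivial] at hpsd
    linarith
  rw [one_mul]
  exact norm_le_norm_of_sq_norm_le_inner hcoercive

lemma spec_inv_one_add_mul_transpose_self_le_one {m n : ℕ} (B : Matrix (Fin m) (Fin n) ℝ) :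
    spec (1 + B * Bᵀ)⁻¹ ≤ 1 :=
  spec_inv_le_one (by simpa using posSemidef_mul_transpose_self B)

lemma frob_transpose_mul_inv_sub_inv_mul_le {m n : ℕ} (B₁ B₂ : Matrix (Fin m) (Fin n) ℝ) :
    frob (B₂ᵀ * ((1 + B₁ * B₁ᵀ)⁻¹ - (1 + B₂ * B₂ᵀ)⁻¹) * B₁) ≤
      spec B₂ * spec B₁ * (spec B₁ + spec B₂) * frob (B₁ - B₂) := by
  rw [nonsing_inv_sub_nonsing_inv (isUnit_one_add_mul_transpose_self B₁)
    (isUnit_one_add_mul_transpose_self B₂), add_sub_add_left_eq_sub]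
  have hmiddle := (frob_mul_mul_le_of_spec_le_one
    (spec_inv_one_add_mul_transpose_self_le_one B₁) (spec_inv_one_add_mul_transpose_self_le_one B₂)
    (B₂ * B₂ᵀ - B₁ * B₁ᵀ)).trans (frob_mul_transpose_sub_mul_transpose_le B₂ B₁)
  calc _ ≤ spec B₂ᵀ * frob ((1 + B₁ * B₁ᵀ)⁻¹ * (B₂ * B₂ᵀ - B₁ * B₁ᵀ) * (1 + B₂ * B₂ᵀ)⁻¹)
        * spec B₁ := frob_mul_mul_le _ _ _
    _ ≤ spec B₂ * ((spec B₂ + spec B₁) * frob (B₂ - B₁)) * spec B₁ := by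
      rw [spec_transpose]
      exact mul_le_mul_of_nonneg_right (mul_le_mul_of_nonneg_left hmiddle (spec_nonneg _))
        (spec_nonneg _)
    _ = spec B₂ * spec B₁ * (spec B₁ + spec B₂) * frob (B₁ - B₂) := by
      rw [frob_sub_comm]; ring

theorem hessian_sqrt_perturbation_bound {m n : ℕ} (B₁ B₂ : Matrix (Fin m) (Fin n) ℝ) :
    frob (B₁ᵀ * ((1 : Matrix (Fin m) (Fin m) ℝ) + B₁ * B₁ᵀ)⁻¹ * B₁ -
        B₂ᵀ * ((1 : Matrix (Fin m) (Fin m) ℝ) + B₂ * B₂ᵀ)⁻¹ * B₂) ≤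
      (spec (((1 : Matrix (Fin m) (Fin m) ℝ) + B₁ * B₁ᵀ)⁻¹ * B₁) +
          spec B₂ * spec B₁ * (spec B₁ + spec B₂) +
          spec (((1 : Matrix (Fin m) (Fin m) ℝ) + B₂ * B₂ᵀ)⁻¹ * B₂)) *
        frob (B₁ - B₂) := by
  set A₁ := ((1 : Matrix (Fin m) (Fin m) ℝ) + B₁ * B₁ᵀ)⁻¹
  set A₂ := ((1 : Matrix (Fin m) (Fin m) ℝ) + B₂ * B₂ᵀ)⁻¹
  have hfirst : frob ((B₁ - B₂)ᵀ * (A₁ * B₁)) ≤ spec (A₁ * B₁) * frob (B₁ - B₂) := by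
    simpa only [frob_transpose, mul_comm (frob (B₁ - B₂))]
      using frob_mul_le_frob_mul_spec (B₁ - B₂)ᵀ (A₁ * B₁)
  have hmiddle : frob (B₂ᵀ * (A₁ - A₂) * B₁) ≤
      spec B₂ * spec B₁ * (spec B₁ + spec B₂) * frob (B₁ - B₂) :=
    frob_transpose_mul_inv_sub_inv_mul_le B₁ B₂
  have hlast : frob (B₂ᵀ * A₂ * (B₁ - B₂)) ≤ spec (A₂ * B₂) * frob (B₁ - B₂) := by
    rw [← spec_transpose_mul_of_transpose_eq (transpose_inv_one_add_mul_transpose_self B₂)]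
    exact frob_mul_le_spec_mul_frob _ _
  rw [transpose_mul_mul_sub_transpose_mul_mul]
  calc _ ≤ frob ((B₁ - B₂)ᵀ * (A₁ * B₁)) + frob (B₂ᵀ * (A₁ - A₂) * B₁)
        + frob (B₂ᵀ * A₂ * (B₁ - B₂)) :=
      (frob_add_le _ _).trans (add_le_add_left (frob_add_le _ _) _)
    _ ≤ spec (A₁ * B₁) * frob (B₁ - B₂)
        + spec B₂ * spec B₁ * (spec B₁ + spec B₂) * frob (B₁ - B₂)
        + spec (A₂ * B₂) * frob (B₁ - B₂) := add_le_add (add_le_add hfirst hmiddle) hlast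
    _ = _ := by ring
end

section
/- Let Γ_pr = L_pr L_prᵀ, Γ_obs positive definite, G, Ĝ ∈ ℝ^{d_obs×d}, μ_pr ∈ range(L_pr), and m ∈ ℝ^{d_obs}. Define Γ_pos, Γ̂_pos as the posterior covariances for G and Ĝ respectively, and the posterior means μ_pos(m) = μ_pr + Γ_pos Gᵀ Γ_obs⁻¹(m − G μ_pr) and μ̂_pos(m) = μ_pr + Γ̂_pos Ĝᵀ Γ_obs⁻¹(m − Ĝ μ_pr). Then ‖μ_pos(m) − μ̂_pos(m)‖₂ ≤ C′ ‖Γ_obs^{-1/2}(G − Ĝ) L_pr‖_F, where C′ = C ‖Gᵀ Γ_obs⁻¹(m − G μ_pr)‖₂ + ‖Γ̂_pos Gᵀ Γ_obs^{-1/2}‖ · ‖L_pr† μ_pr‖₂ + ‖Γ̂_pos (L_pr†)ᵀ‖ · ‖Γ_obs^{-1/2}(m − Ĝ μ_pr)‖₂, and C is the Lipschitz constant from the covariance bound ‖Γ_pos − Γ̂_pos‖ ≤ C ‖Γ_obs^{-1/2}(G − Ĝ)L_pr‖. -/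
/-!
With `B = Γobs^{-1/2} G L`, the Woodbury identity writes the posterior covariance as
`Γpos = L (I + BᵀB)⁻¹ Lᵀ`. The resolvent identity together with the push-through identity
`(I + BᵀB)⁻¹ Bᵀ = Bᵀ (I + BBᵀ)⁻¹` splits `(I + B₁ᵀB₁)⁻¹ - (I + B₂ᵀB₂)⁻¹` into two products
each containing `B₂ - B₁ = -Γobs^{-1/2} (G - Ĝ) L` once, and `‖(I + BᵀB)⁻¹‖ ≤ 1`; this gives
the covariance bound. For the means,
`μpos - μ̂pos = (Γpos - Γ̂pos) Gᵀ Γobs⁻¹ (m - G μpr) - Γ̂pos Gᵀ Γobs⁻¹ (G - Ĝ) μpr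
  + Γ̂pos (G - Ĝ)ᵀ Γobs⁻¹ (m - Ĝ μpr)`,
and the identities `μpr = L L† μpr` and `Γ̂pos = Γ̂pos (L†)ᵀ Lᵀ` make the factor
`Γobs^{-1/2} (G - Ĝ) L` appear in the last two terms. The spectral norm of that factor is at
most its Frobenius norm.
-/

open Matrix

/-- Euclidean norm of a real vector. -/
noncomputable def enorm' {m : ℕ} (v : Fin m → ℝ) : ℝ :=
  Real.sqrt (∑ i, (v i) ^ 2)

/-- Square root of a positive semidefinite matrix (the former `Matrix.PosSemidef.sqrt`). -/
noncomputable def psdSqrt {n : ℕ} {A : Matrix (Fin n) (Fin n) ℝ} (hA : A.PosSemidef) :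
    Matrix (Fin n) (Fin n) ℝ :=
  hA.1.eigenvectorUnitary.1 * diagonal ((↑) ∘ (√·) ∘ hA.1.eigenvalues) *
    (star hA.1.eigenvectorUnitary : Matrix (Fin n) (Fin n) ℝ)

open WithLp
open scoped Matrix.Norms.L2Operator

namespace Matrix

section CommRing

variable {m n α : Type*} [Fintype n] [DecidableEq n] [CommRing α]

theorem inv_sub_inv_eq_inv_mul_sub_mul_inv {A C : Matrix n n α} (hA : IsUnit A.det)
    (hC : IsUnit C.det) : A⁻¹ - C⁻¹ = A⁻¹ * (C - A) * C⁻¹ := by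
  rw [Matrix.mul_sub, Matrix.sub_mul, nonsing_inv_mul _ hA, Matrix.one_mul,
    mul_nonsing_inv_cancel_right _ _ hC]

variable [Fintype m] [DecidableEq m]

theorem inv_one_add_mul_mul_eq_mul_inv_one_add_mul (A : Matrix m n α) (B : Matrix n m α)
    (h : IsUnit (1 + A * B).det) : (1 + A * B)⁻¹ * A = A * (1 + B * A)⁻¹ := by
  have h' : IsUnit (1 + B * A).det := by rwa [← det_one_add_mul_comm]
  calc (1 + A * B)⁻¹ * A = (1 + A * B)⁻¹ * (A * (1 + B * A)) * (1 + B * A)⁻¹ := by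
        rw [Matrix.mul_assoc, Matrix.mul_assoc, mul_nonsing_inv _ h', Matrix.mul_one]
    _ = (1 + A * B)⁻¹ * ((1 + A * B) * A) * (1 + B * A)⁻¹ := by
        simp only [Matrix.mul_add, Matrix.add_mul, Matrix.mul_one, Matrix.one_mul, Matrix.mul_assoc]
    _ = A * (1 + B * A)⁻¹ := by rw [nonsing_inv_mul_cancel_left _ _ h]

end CommRing

section PseudoInverse

variable {l m n α : Type*} [Fintype m] [Fintype n] [CommRing α] {L : Matrix m n α}
  {Ld : Matrix n m α}

theorem mulVec_mulVec_of_mul_mul_eq_self (h : L * Ld * L = L) {v : m → α}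
    (hv : v ∈ Set.range L.mulVec) : L *ᵥ (Ld *ᵥ v) = v := by
  obtain ⟨x, rfl⟩ := hv
  rw [mulVec_mulVec, mulVec_mulVec, h]

theorem mul_transpose_mul_transpose_of_mul_mul_eq_self (h : L * Ld * L = L) (X : Matrix l n α) :
    X * Lᵀ * Ldᵀ * Lᵀ = X * Lᵀ := by
  rw [Matrix.mul_assoc, Matrix.mul_assoc, ← transpose_mul, ← transpose_mul, h]

end PseudoInverse

section Real

variable {m n : Type*} [Fintype m] [Fintype n] [DecidableEq n]

theorem isUnit_det_one_add_transpose_mul_self (B : Matrix m n ℝ) : IsUnit (1 + Bᵀ * B).det := by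
  refine (isUnit_iff_isUnit_det _).1 (PosDef.one.add_posSemidef ?_).isUnit
  simpa only [conjTranspose_eq_transpose_of_trivial] using posSemidef_conjTranspose_mul_self B

variable [DecidableEq m]

theorem inv_one_add_transpose_mul_self_mul_transpose (B : Matrix m n ℝ) :
    (1 + Bᵀ * B)⁻¹ * Bᵀ = ((1 + B * Bᵀ)⁻¹ * B)ᵀ := by
  rw [inv_one_add_mul_mul_eq_mul_inv_one_add_mul _ _ (isUnit_det_one_add_transpose_mul_self B),
    transpose_mul, transpose_nonsing_inv]
  simp

theorem inv_one_add_transpose_mul_self_eq (B : Matrix m n ℝ) :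
    (1 + Bᵀ * B)⁻¹ = 1 - Bᵀ * (1 + B * Bᵀ)⁻¹ * B := by
  have hB := isUnit_det_one_add_transpose_mul_self B
  rw [← inv_one_add_mul_mul_eq_mul_inv_one_add_mul _ _ hB]
  calc (1 + Bᵀ * B)⁻¹ = (1 + Bᵀ * B)⁻¹ * ((1 + Bᵀ * B) - Bᵀ * B) := by
        rw [add_sub_cancel_right, Matrix.mul_one]
    _ = _ := by rw [Matrix.mul_sub, nonsing_inv_mul _ hB, Matrix.mul_assoc]

theorem inv_one_add_transpose_mul_self_sub (B₁ B₂ : Matrix m n ℝ) :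
    (1 + B₁ᵀ * B₁)⁻¹ - (1 + B₂ᵀ * B₂)⁻¹ =
      ((1 + B₁ * B₁ᵀ)⁻¹ * B₁)ᵀ * (B₂ - B₁) * (1 + B₂ᵀ * B₂)⁻¹ +
        (1 + B₁ᵀ * B₁)⁻¹ * (B₂ - B₁)ᵀ * ((1 + B₂ * B₂ᵀ)⁻¹ * B₂) := by
  have hB₂ : (1 + B₂ * B₂ᵀ)⁻¹ * B₂ = B₂ * (1 + B₂ᵀ * B₂)⁻¹ := by
    simpa using inv_one_add_mul_mul_eq_mul_inv_one_add_mul B₂ B₂ᵀ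
      (by simpa using isUnit_det_one_add_transpose_mul_self B₂ᵀ)
  rw [inv_sub_inv_eq_inv_mul_sub_mul_inv (isUnit_det_one_add_transpose_mul_self B₁)
    (isUnit_det_one_add_transpose_mul_self B₂), ← inv_one_add_transpose_mul_self_mul_transpose,
    hB₂, add_sub_add_left_eq_sub,
    show B₂ᵀ * B₂ - B₁ᵀ * B₁ = B₁ᵀ * (B₂ - B₁) + (B₂ - B₁)ᵀ * B₂ by
      simp only [transpose_sub, Matrix.mul_sub, Matrix.sub_mul]; abel]
  simp only [Matrix.mul_add, Matrix.add_mul, Matrix.mul_assoc]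

end Real

section L2OpNorm

variable {l m n : Type*} [Fintype l] [Fintype m] [Fintype n]

theorem norm_toLp_sq (v : n → ℝ) : ‖toLp 2 v‖ ^ 2 = v ⬝ᵥ v := by
  rw [EuclideanSpace.norm_sq_eq]
  simp [dotProduct, sq]

variable [DecidableEq n]

theorem l2_opNorm_transpose [DecidableEq m] (A : Matrix m n ℝ) : ‖Aᵀ‖ = ‖A‖ := by
  rw [← conjTranspose_eq_transpose_of_trivial, l2_opNorm_conjTranspose]

theorem l2_opNorm_mul_mul_le {k : Type*} [Fintype k] [DecidableEq l] [DecidableEq m]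
    (A : Matrix k l ℝ) (B : Matrix l m ℝ) (C : Matrix m n ℝ) :
    ‖A * B * C‖ ≤ ‖A‖ * ‖B‖ * ‖C‖ :=
  (l2_opNorm_mul _ _).trans (by gcongr; exact l2_opNorm_mul _ _)

theorem norm_toLp_mulVec_le (A : Matrix m n ℝ) (v : n → ℝ) :
    ‖toLp 2 (A *ᵥ v)‖ ≤ ‖A‖ * ‖toLp 2 v‖ :=
  A.l2_opNorm_mulVec (toLp 2 v)

theorem l2_opNorm_le_of_forall_mulVec {A : Matrix m n ℝ} {c : ℝ} (hc : 0 ≤ c)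
    (h : ∀ v, ‖toLp 2 (A *ᵥ v)‖ ≤ c * ‖toLp 2 v‖) : ‖A‖ ≤ c := by
  rw [l2_opNorm_def]
  exact ContinuousLinearMap.opNorm_le_bound _ hc fun x => h (ofLp x)

theorem norm_toLp_le_norm_toLp_one_add_transpose_mul_self_mulVec (B : Matrix m n ℝ)
    (y : n → ℝ) : ‖toLp 2 y‖ ≤ ‖toLp 2 ((1 + Bᵀ * B) *ᵥ y)‖ := by
  have hcross : y ⬝ᵥ (Bᵀ *ᵥ (B *ᵥ y)) = ‖toLp 2 (B *ᵥ y)‖ ^ 2 := by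
    rw [norm_toLp_sq, dotProduct_mulVec, vecMul_transpose]
  have hexpand : ‖toLp 2 ((1 + Bᵀ * B) *ᵥ y)‖ ^ 2 =
      ‖toLp 2 y‖ ^ 2 + 2 * ‖toLp 2 (B *ᵥ y)‖ ^ 2 + ‖toLp 2 (Bᵀ *ᵥ (B *ᵥ y))‖ ^ 2 := by
    rw [← hcross, add_mulVec, one_mulVec, ← mulVec_mulVec]
    simp only [norm_toLp_sq, add_dotProduct, dotProduct_add]
    rw [dotProduct_comm (Bᵀ *ᵥ (B *ᵥ y)) y]
    ring
  rw [← sq_le_sq₀ (norm_nonneg _) (norm_nonneg _), hexpand]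
  nlinarith [norm_nonneg (toLp 2 (B *ᵥ y)), norm_nonneg (toLp 2 (Bᵀ *ᵥ (B *ᵥ y)))]

theorem l2_opNorm_inv_one_add_transpose_mul_self_le_one [DecidableEq m] (B : Matrix m n ℝ) :
    ‖(1 + Bᵀ * B)⁻¹‖ ≤ 1 := by
  refine l2_opNorm_le_of_forall_mulVec zero_le_one fun v => ?_
  have hv : (1 + Bᵀ * B) *ᵥ ((1 + Bᵀ * B)⁻¹ *ᵥ v) = v := by
    rw [mulVec_mulVec, mul_nonsing_inv _ (isUnit_det_one_add_transpose_mul_self B), one_mulVec]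
  have := norm_toLp_le_norm_toLp_one_add_transpose_mul_self_mulVec B ((1 + Bᵀ * B)⁻¹ *ᵥ v)
  rwa [hv, ← one_mul ‖toLp 2 v‖] at this

theorem l2_opNorm_inv_one_add_transpose_mul_self_sub_le [DecidableEq m] (B₁ B₂ : Matrix m n ℝ) :
    ‖(1 + B₁ᵀ * B₁)⁻¹ - (1 + B₂ᵀ * B₂)⁻¹‖ ≤
      (‖(1 + B₁ * B₁ᵀ)⁻¹ * B₁‖ + ‖(1 + B₂ * B₂ᵀ)⁻¹ * B₂‖) * ‖B₁ - B₂‖ := by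
  set K₁ := (1 + B₁ * B₁ᵀ)⁻¹ * B₁
  set K₂ := (1 + B₂ * B₂ᵀ)⁻¹ * B₂
  have hI₁ := l2_opNorm_inv_one_add_transpose_mul_self_le_one B₁
  have hI₂ := l2_opNorm_inv_one_add_transpose_mul_self_le_one B₂
  rw [inv_one_add_transpose_mul_self_sub, norm_sub_rev B₁]
  calc _ ≤ ‖K₁ᵀ * (B₂ - B₁) * (1 + B₂ᵀ * B₂)⁻¹‖ + ‖(1 + B₁ᵀ * B₁)⁻¹ * (B₂ - B₁)ᵀ * K₂‖ :=
        norm_add_le _ _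
    _ ≤ ‖K₁ᵀ‖ * ‖B₂ - B₁‖ * ‖(1 + B₂ᵀ * B₂)⁻¹‖ + ‖(1 + B₁ᵀ * B₁)⁻¹‖ * ‖(B₂ - B₁)ᵀ‖ * ‖K₂‖ :=
        add_le_add (l2_opNorm_mul_mul_le _ _ _) (l2_opNorm_mul_mul_le _ _ _)
    _ ≤ ‖K₁‖ * ‖B₂ - B₁‖ * 1 + 1 * ‖B₂ - B₁‖ * ‖K₂‖ := by
        rw [l2_opNorm_transpose, l2_opNorm_transpose]; gcongr
    _ = (‖K₁‖ + ‖K₂‖) * ‖B₂ - B₁‖ := by ring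

theorem l2_opNorm_mul_mul_transpose_le [DecidableEq m] (L : Matrix m n ℝ) (X : Matrix n n ℝ) :
    ‖L * X * Lᵀ‖ ≤ ‖L‖ ^ 2 * ‖X‖ := by
  calc ‖L * X * Lᵀ‖ ≤ ‖L‖ * ‖X‖ * ‖Lᵀ‖ := l2_opNorm_mul_mul_le _ _ _
    _ = ‖L‖ ^ 2 * ‖X‖ := by rw [l2_opNorm_transpose]; ring

end L2OpNorm

end Matrix

section Posterior

open Matrix

variable {o d s : Type*} [Fintype o] [Fintype d] [Fintype s]

theorem posterior_mean_sub_eq {Sinv : Matrix o o ℝ} (hSinv : Sinvᵀ = Sinv) {L : Matrix d s ℝ}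
    {Ld : Matrix s d ℝ} {μ : d → ℝ} (hμ : L *ᵥ (Ld *ᵥ μ) = μ) {Γ Γhat : Matrix d d ℝ}
    (hΓhat : Γhat * Ldᵀ * Lᵀ = Γhat) (G Ghat : Matrix o d ℝ) (m : o → ℝ) :
    (μ + (Γ * Gᵀ * (Sinv * Sinv)) *ᵥ (m - G *ᵥ μ)) -
        (μ + (Γhat * Ghatᵀ * (Sinv * Sinv)) *ᵥ (m - Ghat *ᵥ μ)) =
      (Γ - Γhat) *ᵥ ((Gᵀ * (Sinv * Sinv)) *ᵥ (m - G *ᵥ μ)) -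
        (Γhat * Gᵀ * Sinv * (Sinv * (G - Ghat) * L)) *ᵥ (Ld *ᵥ μ) +
        (Γhat * Ldᵀ * (Sinv * (G - Ghat) * L)ᵀ) *ᵥ (Sinv *ᵥ (m - Ghat *ᵥ μ)) := by
  have h₁ : (Γhat * Gᵀ * Sinv * (Sinv * (G - Ghat) * L)) *ᵥ (Ld *ᵥ μ) =
      (Γhat * Gᵀ * (Sinv * Sinv) * (G - Ghat)) *ᵥ μ := by
    rw [← mulVec_mulVec, ← mulVec_mulVec (Ld *ᵥ μ), hμ, mulVec_mulVec]
    simp only [Matrix.mul_assoc]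
  have h₂ : (Γhat * Ldᵀ * (Sinv * (G - Ghat) * L)ᵀ) *ᵥ (Sinv *ᵥ (m - Ghat *ᵥ μ)) =
      (Γhat * (G - Ghat)ᵀ * (Sinv * Sinv)) *ᵥ (m - Ghat *ᵥ μ) := by
    rw [mulVec_mulVec, transpose_mul, transpose_mul, hSinv]
    conv_rhs => rw [← hΓhat]
    simp only [Matrix.mul_assoc]
  rw [h₁, h₂]
  simp only [mulVec_sub, sub_mulVec, mulVec_mulVec, transpose_sub, Matrix.mul_sub,
    Matrix.sub_mul, Matrix.mul_assoc]
  abel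

variable [DecidableEq o] [DecidableEq s]

theorem norm_toLp_posterior_mean_sub_le [DecidableEq d] {Sinv : Matrix o o ℝ}
    (hSinv : Sinvᵀ = Sinv) {L : Matrix d s ℝ} {Ld : Matrix s d ℝ} {μ : d → ℝ}
    (hμ : L *ᵥ (Ld *ᵥ μ) = μ) {Γ Γhat : Matrix d d ℝ} (hΓhat : Γhat * Ldᵀ * Lᵀ = Γhat)
    (G Ghat : Matrix o d ℝ) (m : o → ℝ) {c : ℝ}
    (hΓ : ‖Γ - Γhat‖ ≤ c * ‖Sinv * (G - Ghat) * L‖) :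
    ‖toLp 2 ((μ + (Γ * Gᵀ * (Sinv * Sinv)) *ᵥ (m - G *ᵥ μ)) -
        (μ + (Γhat * Ghatᵀ * (Sinv * Sinv)) *ᵥ (m - Ghat *ᵥ μ)))‖ ≤
      (c * ‖toLp 2 ((Gᵀ * (Sinv * Sinv)) *ᵥ (m - G *ᵥ μ))‖ +
        ‖Γhat * Gᵀ * Sinv‖ * ‖toLp 2 (Ld *ᵥ μ)‖ +
        ‖Γhat * Ldᵀ‖ * ‖toLp 2 (Sinv *ᵥ (m - Ghat *ᵥ μ))‖) * ‖Sinv * (G - Ghat) * L‖ := by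
  set E := Sinv * (G - Ghat) * L
  set r := (Gᵀ * (Sinv * Sinv)) *ᵥ (m - G *ᵥ μ)
  set w := Sinv *ᵥ (m - Ghat *ᵥ μ)
  rw [posterior_mean_sub_eq hSinv hμ hΓhat, toLp_add, toLp_sub]
  calc _ ≤ ‖toLp 2 ((Γ - Γhat) *ᵥ r)‖ + ‖toLp 2 ((Γhat * Gᵀ * Sinv * E) *ᵥ (Ld *ᵥ μ))‖ +
        ‖toLp 2 ((Γhat * Ldᵀ * Eᵀ) *ᵥ w)‖ := norm_add_le_of_le (norm_sub_le _ _) le_rfl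
    _ ≤ ‖Γ - Γhat‖ * ‖toLp 2 r‖ + ‖Γhat * Gᵀ * Sinv * E‖ * ‖toLp 2 (Ld *ᵥ μ)‖ +
        ‖Γhat * Ldᵀ * Eᵀ‖ * ‖toLp 2 w‖ := by
      gcongr <;> exact norm_toLp_mulVec_le _ _
    _ ≤ c * ‖E‖ * ‖toLp 2 r‖ + ‖Γhat * Gᵀ * Sinv‖ * ‖E‖ * ‖toLp 2 (Ld *ᵥ μ)‖ +
        ‖Γhat * Ldᵀ‖ * ‖E‖ * ‖toLp 2 w‖ := by
      gcongr
      · exact l2_opNorm_mul _ _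
      · exact (l2_opNorm_mul _ _).trans_eq (by rw [l2_opNorm_transpose])
    _ = _ := by ring

theorem posterior_covariance_eq {Γobs S : Matrix o o ℝ} (hS : IsUnit S.det)
    (hΓobs : S * Sᵀ = Γobs) (G : Matrix o d ℝ) (L : Matrix d s ℝ) :
    L * Lᵀ - L * Lᵀ * Gᵀ * (Γobs + G * (L * Lᵀ) * Gᵀ)⁻¹ * (G * (L * Lᵀ)) =
      L * (1 + (S⁻¹ * G * L)ᵀ * (S⁻¹ * G * L))⁻¹ * Lᵀ := by
  set B := S⁻¹ * G * L
  have hGL : G * L = S * B := by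
    simp only [B, Matrix.mul_assoc, mul_nonsing_inv_cancel_left _ _ hS]
  have hmid : Γobs + G * (L * Lᵀ) * Gᵀ = S * (1 + B * Bᵀ) * Sᵀ := by
    rw [← hΓobs, ← Matrix.mul_assoc, Matrix.mul_assoc _ _ Gᵀ, ← transpose_mul, hGL, transpose_mul]
    simp only [Matrix.mul_add, Matrix.add_mul, Matrix.mul_one, Matrix.mul_assoc]
  have hSt : IsUnit Sᵀ.det := by rwa [det_transpose]
  rw [inv_one_add_transpose_mul_self_eq, hmid, Matrix.mul_inv_rev, Matrix.mul_inv_rev,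
    Matrix.mul_assoc L Lᵀ Gᵀ, ← transpose_mul, ← Matrix.mul_assoc G L, hGL, transpose_mul]
  simp only [Matrix.mul_sub, Matrix.sub_mul, Matrix.mul_one, Matrix.mul_assoc,
    mul_nonsing_inv_cancel_left _ _ hSt, nonsing_inv_mul_cancel_left _ _ hS]

theorem l2_opNorm_posterior_covariance_sub_le [DecidableEq d] (L : Matrix d s ℝ)
    (B₁ B₂ : Matrix o s ℝ) :
    ‖L * (1 + B₁ᵀ * B₁)⁻¹ * Lᵀ - L * (1 + B₂ᵀ * B₂)⁻¹ * Lᵀ‖ ≤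
      ‖L‖ ^ 2 * ((‖(1 + B₁ * B₁ᵀ)⁻¹ * B₁‖ + ‖(1 + B₂ * B₂ᵀ)⁻¹ * B₂‖) * ‖B₁ - B₂‖) := by
  rw [← Matrix.sub_mul, ← Matrix.mul_sub]
  exact (l2_opNorm_mul_mul_transpose_le _ _).trans
    (by gcongr; exact l2_opNorm_inv_one_add_transpose_mul_self_sub_le _ _)

end Posterior

theorem psdSqrt_mul_self {n : ℕ} {A : Matrix (Fin n) (Fin n) ℝ} (hA : A.PosSemidef) :
    psdSqrt hA * psdSqrt hA = A := by
  have hU : (star hA.1.eigenvectorUnitary : Matrix (Fin n) (Fin n) ℝ) *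
      (hA.1.eigenvectorUnitary : Matrix (Fin n) (Fin n) ℝ) = 1 := Unitary.coe_star_mul_self _
  have hD : diagonal ((↑) ∘ (√·) ∘ hA.1.eigenvalues) * diagonal ((↑) ∘ (√·) ∘ hA.1.eigenvalues) =
      diagonal ((RCLike.ofReal : ℝ → ℝ) ∘ hA.1.eigenvalues) := by
    rw [diagonal_mul_diagonal]
    congr 1 with i
    simp [Real.mul_self_sqrt (hA.eigenvalues_nonneg i)]
  conv_rhs => rw [hA.1.spectral_theorem, Unitary.conjStarAlgAut_apply]
  simp only [psdSqrt, Matrix.mul_assoc]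
  rw [← Matrix.mul_assoc (star _ : Matrix (Fin n) (Fin n) ℝ), hU, Matrix.one_mul,
    ← Matrix.mul_assoc (diagonal _), hD]

theorem psdSqrt_transpose {n : ℕ} {A : Matrix (Fin n) (Fin n) ℝ} (hA : A.PosSemidef) :
    (psdSqrt hA)ᵀ = psdSqrt hA := by
  rw [psdSqrt, transpose_mul, transpose_mul, diagonal_transpose, star_eq_conjTranspose,
    conjTranspose_eq_transpose_of_trivial, transpose_transpose, Matrix.mul_assoc]

theorem isUnit_det_psdSqrt {n : ℕ} {A : Matrix (Fin n) (Fin n) ℝ} (hA : A.PosDef) :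
    IsUnit (psdSqrt hA.posSemidef).det := by
  have hdet : (psdSqrt hA.posSemidef).det * (psdSqrt hA.posSemidef).det = A.det := by
    rw [← det_mul, psdSqrt_mul_self]
  exact isUnit_iff_ne_zero.2 (left_ne_zero_of_mul (hdet ▸ hA.det_pos.ne'))

theorem spec_eq_l2_opNorm {a b : ℕ} (M : Matrix (Fin a) (Fin b) ℝ) : spec M = ‖M‖ := rfl

theorem enorm'_eq_norm_toLp {a : ℕ} (v : Fin a → ℝ) : enorm' v = ‖toLp 2 v‖ := by
  simp [enorm', EuclideanSpace.norm_eq]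

theorem l2_opNorm_le_frob {a b : ℕ} (M : Matrix (Fin a) (Fin b) ℝ) : ‖M‖ ≤ frob M := by
  refine l2_opNorm_le_of_forall_mulVec (Real.sqrt_nonneg _) fun v => ?_
  rw [← enorm'_eq_norm_toLp, ← enorm'_eq_norm_toLp, frob, enorm', enorm',
    ← Real.sqrt_mul (by positivity)]
  refine Real.sqrt_le_sqrt ?_
  rw [Finset.sum_mul]
  exact Finset.sum_le_sum fun i _ => by
    simpa only [mulVec, dotProduct] using Finset.sum_mul_sq_le_sq_mul_sq Finset.univ (M i) v

theorem posterior_mean_perturbation_bound_general {d dobs s : ℕ}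
    (L : Matrix (Fin d) (Fin s) ℝ) (Γpr : Matrix (Fin d) (Fin d) ℝ)
    (hΓpr : L * Lᵀ = Γpr)
    (Γobs : Matrix (Fin dobs) (Fin dobs) ℝ) (hΓobs : Γobs.PosDef)
    (G Ghat : Matrix (Fin dobs) (Fin d) ℝ)
    (μpr : Fin d → ℝ) (hμpr : μpr ∈ Set.range L.mulVec)
    (m : Fin dobs → ℝ)
    -- Moore–Penrose pseudoinverse of `L`, characterized by the Penrose conditions
    (Ld : Matrix (Fin s) (Fin d) ℝ)
    (hLd1 : L * Ld * L = L)
    -- `Sinv = Γobs^{-1/2}`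
    (Sinv : Matrix (Fin dobs) (Fin dobs) ℝ) (hSinv : Sinv = (psdSqrt hΓobs.posSemidef)⁻¹)
    -- posterior covariances and means
    (Γpos Γhatpos : Matrix (Fin d) (Fin d) ℝ)
    (hpos : Γpos = Γpr - Γpr * Gᵀ * (Γobs + G * Γpr * Gᵀ)⁻¹ * (G * Γpr))
    (hhatpos : Γhatpos = Γpr - Γpr * Ghatᵀ * (Γobs + Ghat * Γpr * Ghatᵀ)⁻¹ * (Ghat * Γpr))
    (μpos μhatpos : Fin d → ℝ)
    (hμpos : μpos = μpr + (Γpos * Gᵀ * Γobs⁻¹) *ᵥ (m - G *ᵥ μpr))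
    (hμhatpos : μhatpos = μpr + (Γhatpos * Ghatᵀ * Γobs⁻¹) *ᵥ (m - Ghat *ᵥ μpr))
    -- square roots of the prior-preconditioned Hessians and the Lipschitz constants
    (B₁ B₂ : Matrix (Fin dobs) (Fin s) ℝ)
    (hB₁ : B₁ = Sinv * G * L) (hB₂ : B₂ = Sinv * Ghat * L)
    (Cc : ℝ)
    (hCc : Cc = spec L ^ 2 *
      (spec (((1 : Matrix (Fin dobs) (Fin dobs) ℝ) + B₁ * B₁ᵀ)⁻¹ * B₁) +
        spec B₂ * spec B₁ * (spec B₁ + spec B₂) +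
        spec (((1 : Matrix (Fin dobs) (Fin dobs) ℝ) + B₂ * B₂ᵀ)⁻¹ * B₂)))
    (Cc' : ℝ)
    (hCc' : Cc' = Cc * enorm' ((Gᵀ * Γobs⁻¹) *ᵥ (m - G *ᵥ μpr)) +
      spec (Γhatpos * Gᵀ * Sinv) * enorm' (Ld *ᵥ μpr) +
      spec (Γhatpos * Ldᵀ) * enorm' (Sinv *ᵥ (m - Ghat *ᵥ μpr))) :
    enorm' (μpos - μhatpos) ≤ Cc' * frob (Sinv * (G - Ghat) * L) := by
  obtain ⟨S, hSdet, hSsymm, hSsq, rfl⟩ : ∃ S : Matrix (Fin dobs) (Fin dobs) ℝ,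
      IsUnit S.det ∧ Sᵀ = S ∧ S * S = Γobs ∧ S⁻¹ = Sinv :=
    ⟨_, isUnit_det_psdSqrt hΓobs, psdSqrt_transpose _, psdSqrt_mul_self _, hSinv.symm⟩
  have hΓobsS : S * Sᵀ = Γobs := by rw [hSsymm, hSsq]
  have hΓobsInv : Γobs⁻¹ = S⁻¹ * S⁻¹ := by rw [← hSsq, Matrix.mul_inv_rev]
  have hSinvT : (S⁻¹)ᵀ = S⁻¹ := by rw [transpose_nonsing_inv, hSsymm]
  subst hΓpr hB₁ hB₂
  have hΓpos := hpos.trans (posterior_covariance_eq hSdet hΓobsS G L)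
  have hΓhatpos := hhatpos.trans (posterior_covariance_eq hSdet hΓobsS Ghat L)
  have hΓhat : Γhatpos * Ldᵀ * Lᵀ = Γhatpos := by
    rw [hΓhatpos]
    exact mul_transpose_mul_transpose_of_mul_mul_eq_self hLd1 _
  simp only [spec_eq_l2_opNorm, enorm'_eq_norm_toLp] at hCc hCc' ⊢
  have hcov : ‖Γpos - Γhatpos‖ ≤ Cc * ‖S⁻¹ * (G - Ghat) * L‖ := by
    rw [hΓpos, hΓhatpos, hCc, Matrix.mul_sub, Matrix.sub_mul]
    refine (l2_opNorm_posterior_covariance_sub_le L _ _).trans ?_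
    rw [mul_assoc (‖L‖ ^ 2)]
    gcongr ‖L‖ ^ 2 * (?_ * _)
    linarith [show 0 ≤ ‖S⁻¹ * Ghat * L‖ * ‖S⁻¹ * G * L‖ *
      (‖S⁻¹ * G * L‖ + ‖S⁻¹ * Ghat * L‖) by positivity]
  subst hCc hCc'
  rw [hμpos, hμhatpos, hΓobsInv]
  refine (norm_toLp_posterior_mean_sub_le hSinvT (mulVec_mulVec_of_mul_mul_eq_self hLd1 hμpr)
    hΓhat G Ghat m hcov).trans ?_
  gcongr
  exact l2_opNorm_le_frob _

/-- Local Lipschitz bound for the posterior mean under perturbation of the forward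
model, with the explicit constant `C′`. -/
theorem posterior_mean_perturbation_bound {d dobs s : ℕ}
    (L : Matrix (Fin d) (Fin s) ℝ) (Γpr : Matrix (Fin d) (Fin d) ℝ)
    (hΓpr : L * Lᵀ = Γpr)
    (Γobs : Matrix (Fin dobs) (Fin dobs) ℝ) (hΓobs : Γobs.PosDef)
    (G Ghat : Matrix (Fin dobs) (Fin d) ℝ)
    (μpr : Fin d → ℝ) (hμpr : μpr ∈ Set.range L.mulVec)
    (m : Fin dobs → ℝ)
    -- Moore–Penrose pseudoinverse of `L`, characterized by the Penrose conditions
    (Ld : Matrix (Fin s) (Fin d) ℝ)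
    (hLd1 : L * Ld * L = L) (hLd2 : Ld * L * Ld = Ld)
    (hLd3 : (L * Ld)ᵀ = L * Ld) (hLd4 : (Ld * L)ᵀ = Ld * L)
    -- `Sinv = Γobs^{-1/2}`
    (Sinv : Matrix (Fin dobs) (Fin dobs) ℝ) (hSinv : Sinv = (psdSqrt hΓobs.posSemidef)⁻¹)
    -- posterior covariances and means
    (Γpos Γhatpos : Matrix (Fin d) (Fin d) ℝ)
    (hpos : Γpos = Γpr - Γpr * Gᵀ * (Γobs + G * Γpr * Gᵀ)⁻¹ * (G * Γpr))
    (hhatpos : Γhatpos = Γpr - Γpr * Ghatᵀ * (Γobs + Ghat * Γpr * Ghatᵀ)⁻¹ * (Ghat * Γpr))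
    (μpos μhatpos : Fin d → ℝ)
    (hμpos : μpos = μpr + (Γpos * Gᵀ * Γobs⁻¹) *ᵥ (m - G *ᵥ μpr))
    (hμhatpos : μhatpos = μpr + (Γhatpos * Ghatᵀ * Γobs⁻¹) *ᵥ (m - Ghat *ᵥ μpr))
    -- square roots of the prior-preconditioned Hessians and the Lipschitz constants
    (B₁ B₂ : Matrix (Fin dobs) (Fin s) ℝ)
    (hB₁ : B₁ = Sinv * G * L) (hB₂ : B₂ = Sinv * Ghat * L)
    (Cc : ℝ)
    (hCc : Cc = spec L ^ 2 *
      (spec (((1 : Matrix (Fin dobs) (Fin dobs) ℝ) + B₁ * B₁ᵀ)⁻¹ * B₁) +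
        spec B₂ * spec B₁ * (spec B₁ + spec B₂) +
        spec (((1 : Matrix (Fin dobs) (Fin dobs) ℝ) + B₂ * B₂ᵀ)⁻¹ * B₂)))
    (Cc' : ℝ)
    (hCc' : Cc' = Cc * enorm' ((Gᵀ * Γobs⁻¹) *ᵥ (m - G *ᵥ μpr)) +
      spec (Γhatpos * Gᵀ * Sinv) * enorm' (Ld *ᵥ μpr) +
      spec (Γhatpos * Ldᵀ) * enorm' (Sinv *ᵥ (m - Ghat *ᵥ μpr))) :
    enorm' (μpos - μhatpos) ≤ Cc' * frob (Sinv * (G - Ghat) * L) :=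
  posterior_mean_perturbation_bound_general L Γpr hΓpr Γobs hΓobs G Ghat μpr hμpr m Ld hLd1 Sinv
    hSinv Γpos Γhatpos hpos hhatpos μpos μhatpos hμpos hμhatpos B₁ B₂ hB₁ hB₂ Cc hCc Cc' hCc'
end
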